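/- arXiv:1512.01968 — 4 statements merged into one kernel-verified Lean document; each statement's English description precedes it below -/
import Mathlib

section
/- Let δ > 0, let f : {0,1}^n → {0,1}, let μ be a bit-wise product distribution on {0,1}^n, and let A be a subcube with μ_1(A) ≤ δ·μ_0(A). Suppose nonnegative reals (w_R : R a subcube) satisfy Σ_{R∋x} w_R ≤ 1 for all x ∈ {0,1}^n and Σ_{R∋x} w_R ≤ β₁ for all x ∈ f^{-1}(0). Let 𝓑 be the set of subcubes B whose support is disjoint from the support of A. Then Σ_{B∈𝓑} μ_1(B)·w_B ≤ β₁ + δ. -/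
open scoped BigOperators
open scoped Classical

noncomputable section

/-! ## Probability distributions on finite types -/

/-- `p` is a probability distribution on the finite type `α`. -/
def IsDist {α : Type} [Fintype α] (p : α → ℝ) : Prop :=
  (∀ a, 0 ≤ p a) ∧ ∑ a, p a = 1

/-- `μ` (in curried form) is a probability distribution on `X × Y`. -/
def IsDist2 {X Y : Type} [Fintype X] [Fintype Y] (μ : X → Y → ℝ) : Prop :=
  (∀ x y, 0 ≤ μ x y) ∧ ∑ x, ∑ y, μ x y = 1

/-! ## Deterministic communication protocols -/

/-- A deterministic two-party communication protocol: a finite binary tree where each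
internal node is owned by Alice (`nodeA`) or Bob (`nodeB`) and is labeled by a function
of that player's input choosing one of the two children; leaves carry Boolean outputs. -/
inductive Protocol (X Y : Type) : Type
  | leaf : Bool → Protocol X Y
  | nodeA : (X → Bool) → Protocol X Y → Protocol X Y → Protocol X Y
  | nodeB : (Y → Bool) → Protocol X Y → Protocol X Y → Protocol X Y

namespace Protocol

def eval {X Y : Type} : Protocol X Y → X → Y → Bool
  | leaf b, _, _ => b
  | nodeA g t0 t1, x, y => if g x then eval t1 x y else eval t0 x y
  | nodeB g t0 t1, x, y => if g y then eval t1 x y else eval t0 x y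

/-- Depth (number of bits communicated in the worst case). -/
def depth {X Y : Type} : Protocol X Y → ℕ
  | leaf _ => 0
  | nodeA _ t0 t1 => max (depth t0) (depth t1) + 1
  | nodeB _ t0 t1 => max (depth t0) (depth t1) + 1

/-- Number of leaves. -/
def leavesCount {X Y : Type} : Protocol X Y → ℕ
  | leaf _ => 1
  | nodeA _ t0 t1 => leavesCount t0 + leavesCount t1
  | nodeB _ t0 t1 => leavesCount t0 + leavesCount t1

/-- The sequence of bits communicated on input `(x, y)`. -/
def transcript {X Y : Type} : Protocol X Y → X → Y → List Bool
  | leaf _, _, _ => []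
  | nodeA g t0 t1, x, y =>
      if g x then true :: transcript t1 x y else false :: transcript t0 x y
  | nodeB g t0 t1, x, y =>
      if g y then true :: transcript t1 x y else false :: transcript t0 x y

end Protocol

/-- Error of a deterministic protocol w.r.t. input distribution `μ`. -/
def commErr {X Y : Type} [Fintype X] [Fintype Y]
    (μ : X → Y → ℝ) (f : X → Y → Bool) (P : Protocol X Y) : ℝ :=
  ∑ x, ∑ y, if P.eval x y ≠ f x y then μ x y else 0

/-- Distributional communication complexity `CC^μ_ε(f)`: the minimum depth of a
deterministic protocol erring with probability at most `ε` under `μ`. -/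
def CCdist {X Y : Type} [Fintype X] [Fintype Y]
    (μ : X → Y → ℝ) (f : X → Y → Bool) (ε : ℝ) : ℕ :=
  sInf {d : ℕ | ∃ P : Protocol X Y, P.depth ≤ d ∧ commErr μ f P ≤ ε}

/-- The advantage `adv_μ(Π)` of a protocol w.r.t. a (not necessarily normalized) measure. -/
def protAdv {X Y : Type} [Fintype X] [Fintype Y]
    (μ : X → Y → ℝ) (f : X → Y → Bool) (P : Protocol X Y) : ℝ :=
  ∑ x, ∑ y, if P.eval x y = f x y then μ x y else - μ x y

/-! ## Information complexity -/

/-- Probability of an event under a finite (possibly unnormalized) distribution. -/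
def prOf {Ω : Type} [Fintype Ω] (p : Ω → ℝ) (q : Ω → Prop) : ℝ :=
  ∑ ω, if q ω then p ω else 0

/-- Conditional mutual information `I(A ; B | C)` (in bits) of random variables `A`, `B`, `C`
defined on a finite probability space `(Ω, p)`. -/
def condMI {Ω α β γ : Type} [Fintype Ω] (p : Ω → ℝ)
    (A : Ω → α) (B : Ω → β) (C : Ω → γ) : ℝ :=
  ∑ ω, p ω * Real.logb 2 (
    (prOf p (fun ω' => A ω' = A ω ∧ B ω' = B ω ∧ C ω' = C ω) *
      prOf p (fun ω' => C ω' = C ω)) /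
    (prOf p (fun ω' => A ω' = A ω ∧ C ω' = C ω) *
      prOf p (fun ω' => B ω' = B ω ∧ C ω' = C ω)))

/-- Internal information cost `IC^μ(Π) = I(X;T|Y) + I(Y;T|X)` of the public-coin protocol
given by a distribution `ρ` on `Fin m` together with deterministic protocols `P r`; the
transcript `T` consists of the public randomness together with the communicated bits. -/
def infoCost {X Y : Type} [Fintype X] [Fintype Y] (μ : X → Y → ℝ)
    {m : ℕ} (ρ : Fin m → ℝ) (P : Fin m → Protocol X Y) : ℝ :=
  condMI (fun ω : X × Y × Fin m => μ ω.1 ω.2.1 * ρ ω.2.2)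
      (fun ω => ω.1)
      (fun ω => (ω.2.2, (P ω.2.2).transcript ω.1 ω.2.1))
      (fun ω => ω.2.1)
  + condMI (fun ω : X × Y × Fin m => μ ω.1 ω.2.1 * ρ ω.2.2)
      (fun ω => ω.2.1)
      (fun ω => (ω.2.2, (P ω.2.2).transcript ω.1 ω.2.1))
      (fun ω => ω.1)

/-- Error of a public-coin protocol under input distribution `μ` and coin distribution `ρ`. -/
def randErr {X Y : Type} [Fintype X] [Fintype Y] (μ : X → Y → ℝ) (f : X → Y → Bool)
    {m : ℕ} (ρ : Fin m → ℝ) (P : Fin m → Protocol X Y) : ℝ :=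
  ∑ x, ∑ y, ∑ r, if (P r).eval x y ≠ f x y then μ x y * ρ r else 0

/-- `IC^μ_ε(f)`: infimum of the information cost over all public-coin protocols computing
`f` with error at most `ε` under `μ`. -/
def ICmu {X Y : Type} [Fintype X] [Fintype Y]
    (μ : X → Y → ℝ) (f : X → Y → Bool) (ε : ℝ) : ℝ :=
  sInf { c : ℝ | ∃ (m : ℕ) (ρ : Fin m → ℝ) (P : Fin m → Protocol X Y),
    IsDist ρ ∧ randErr μ f ρ P ≤ ε ∧ c = infoCost μ ρ P }

/-- `IC_ε(f) = max_μ IC^μ_ε(f)`. -/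
def IC {X Y : Type} [Fintype X] [Fintype Y] (f : X → Y → Bool) (ε : ℝ) : ℝ :=
  sSup { c : ℝ | ∃ μ : X → Y → ℝ, IsDist2 μ ∧ c = ICmu μ f ε }

/-! ## Rectangles, smooth rectangle bound and partition bound -/

/-- Total weight of rectangles containing `(x, y)`: a combinatorial rectangle is a pair
`R = (S, T)` of finite sets, and `(x,y) ∈ R` iff `x ∈ S ∧ y ∈ T`. -/
def rcov {X Y : Type} [Fintype X] [Fintype Y]
    (w : Finset X × Finset Y → ℝ) (x : X) (y : Y) : ℝ :=
  ∑ R : Finset X × Finset Y, if x ∈ R.1 ∧ y ∈ R.2 then w R else 0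

/-- `μ(R)` for a rectangle `R`. -/
def rMass {X Y : Type} [Fintype X] [Fintype Y]
    (μ : X → Y → ℝ) (R : Finset X × Finset Y) : ℝ :=
  ∑ x, ∑ y, if x ∈ R.1 ∧ y ∈ R.2 then μ x y else 0

/-- `μ_z(R) = μ(R ∩ f⁻¹(z))` for a rectangle `R`. -/
def rMassZ {X Y : Type} [Fintype X] [Fintype Y]
    (μ : X → Y → ℝ) (f : X → Y → Bool) (z : Bool) (R : Finset X × Finset Y) : ℝ :=
  ∑ x, ∑ y, if (x ∈ R.1 ∧ y ∈ R.2) ∧ f x y = z then μ x y else 0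

/-- `μ_z = μ(f⁻¹(z))`. -/
def totalZ {X Y : Type} [Fintype X] [Fintype Y]
    (μ : X → Y → ℝ) (f : X → Y → Bool) (z : Bool) : ℝ :=
  ∑ x, ∑ y, if f x y = z then μ x y else 0

/-- `|μ|`, the total mass of a measure. -/
def totalMass {X Y : Type} [Fintype X] [Fintype Y] (μ : X → Y → ℝ) : ℝ :=
  ∑ x, ∑ y, μ x y

/-- Restriction of a measure to a rectangle. -/
def restrictRect {X Y : Type} (μ : X → Y → ℝ) (R : Finset X × Finset Y) : X → Y → ℝ :=
  fun x y => if x ∈ R.1 ∧ y ∈ R.2 then μ x y else 0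

/-- Distributional smooth rectangle bound `srec^{z,μ}_{ε,δ}(f)` (LP optimal value). -/
def srecZmu {X Y : Type} [Fintype X] [Fintype Y]
    (μ : X → Y → ℝ) (f : X → Y → Bool) (z : Bool) (ε δ : ℝ) : ℝ :=
  sInf { v : ℝ | ∃ w : Finset X × Finset Y → ℝ,
    (∀ R, 0 ≤ w R) ∧
    ((1 - ε) * totalZ μ f z ≤ ∑ x, ∑ y, if f x y = z then μ x y * rcov w x y else 0) ∧
    (∀ x y, f x y ≠ z → rcov w x y ≤ δ) ∧
    (∀ x y, rcov w x y ≤ 1) ∧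
    v = ∑ R : Finset X × Finset Y, w R }

/-- `srec^μ_{ε,δ}(f) = max{srec^{0,μ}_{ε,δ}(f), srec^{1,μ}_{ε,δ}(f)}`. -/
def srecMu {X Y : Type} [Fintype X] [Fintype Y]
    (μ : X → Y → ℝ) (f : X → Y → Bool) (ε δ : ℝ) : ℝ :=
  max (srecZmu μ f false ε δ) (srecZmu μ f true ε δ)

/-- Smooth rectangle bound `srec^z_{ε,δ}(f)` (LP optimal value). -/
def srecZ {X Y : Type} [Fintype X] [Fintype Y]
    (f : X → Y → Bool) (z : Bool) (ε δ : ℝ) : ℝ :=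
  sInf { v : ℝ | ∃ w : Finset X × Finset Y → ℝ,
    (∀ R, 0 ≤ w R) ∧
    (∀ x y, f x y = z → 1 - ε ≤ rcov w x y) ∧
    (∀ x y, f x y ≠ z → rcov w x y ≤ δ) ∧
    (∀ x y, rcov w x y ≤ 1) ∧
    v = ∑ R : Finset X × Finset Y, w R }

/-- `srec_{ε,δ}(f) = max{srec^0_{ε,δ}(f), srec^1_{ε,δ}(f)}`. -/
def srec {X Y : Type} [Fintype X] [Fintype Y] (f : X → Y → Bool) (ε δ : ℝ) : ℝ :=
  max (srecZ f false ε δ) (srecZ f true ε δ)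

/-- Partition bound `prt_ε(f)` (LP optimal value). -/
def prt {X Y : Type} [Fintype X] [Fintype Y] (f : X → Y → Bool) (ε : ℝ) : ℝ :=
  sInf { v : ℝ | ∃ w : Bool → Finset X × Finset Y → ℝ,
    (∀ z R, 0 ≤ w z R) ∧
    (∀ x y, 1 - ε ≤ rcov (w (f x y)) x y) ∧
    (∀ x y, rcov (w false) x y + rcov (w true) x y = 1) ∧
    v = ∑ R : Finset X × Finset Y, (w false R + w true R) }

/-! ### General-output versions -/

/-- Smooth rectangle bound `srec^z_{ε,δ}(f)` for general output alphabet. -/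
def srecZgen {X Y Z : Type} [Fintype X] [Fintype Y]
    (f : X → Y → Z) (z : Z) (ε δ : ℝ) : ℝ :=
  sInf { v : ℝ | ∃ w : Finset X × Finset Y → ℝ,
    (∀ R, 0 ≤ w R) ∧
    (∀ x y, f x y = z → 1 - ε ≤ rcov w x y) ∧
    (∀ x y, f x y ≠ z → rcov w x y ≤ δ) ∧
    (∀ x y, rcov w x y ≤ 1) ∧
    v = ∑ R : Finset X × Finset Y, w R }

/-- `srec_{ε,δ}(f) = max_{z ∈ Z} srec^z_{ε,δ}(f)`. -/
def srecGen {X Y Z : Type} [Fintype X] [Fintype Y] [Fintype Z]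
    (f : X → Y → Z) (ε δ : ℝ) : ℝ :=
  sSup (Set.range fun z : Z => srecZgen f z ε δ)

/-- Distributional smooth rectangle bound for general output alphabet. -/
def srecZmuGen {X Y Z : Type} [Fintype X] [Fintype Y]
    (μ : X → Y → ℝ) (f : X → Y → Z) (z : Z) (ε δ : ℝ) : ℝ :=
  sInf { v : ℝ | ∃ w : Finset X × Finset Y → ℝ,
    (∀ R, 0 ≤ w R) ∧
    ((1 - ε) * (∑ x, ∑ y, if f x y = z then μ x y else 0) ≤
      ∑ x, ∑ y, if f x y = z then μ x y * rcov w x y else 0) ∧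
    (∀ x y, f x y ≠ z → rcov w x y ≤ δ) ∧
    (∀ x y, rcov w x y ≤ 1) ∧
    v = ∑ R : Finset X × Finset Y, w R }

/-- `srec^μ_{ε,δ}(f) = max_{z ∈ Z} srec^{z,μ}_{ε,δ}(f)`. -/
def srecMuGen {X Y Z : Type} [Fintype X] [Fintype Y] [Fintype Z]
    (μ : X → Y → ℝ) (f : X → Y → Z) (ε δ : ℝ) : ℝ :=
  sSup (Set.range fun z : Z => srecZmuGen μ f z ε δ)

/-- Partition bound for general output alphabet. -/
def prtGen {X Y Z : Type} [Fintype X] [Fintype Y] [Fintype Z]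
    (f : X → Y → Z) (ε : ℝ) : ℝ :=
  sInf { v : ℝ | ∃ w : Z → Finset X × Finset Y → ℝ,
    (∀ z R, 0 ≤ w z R) ∧
    (∀ x y, 1 - ε ≤ rcov (w (f x y)) x y) ∧
    (∀ x y, (∑ z : Z, rcov (w z) x y) = 1) ∧
    v = ∑ z : Z, ∑ R : Finset X × Finset Y, w z R }

/-! ## Decision trees, subcubes and the query partition bound -/

/-- Deterministic decision trees on `n` input bits. -/
inductive DTree (n : ℕ) : Type
  | leaf : Bool → DTree n
  | node : Fin n → DTree n → DTree n → DTree n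

def DTree.eval {n : ℕ} : DTree n → (Fin n → Bool) → Bool
  | .leaf b, _ => b
  | .node i t0 t1, x => if x i then DTree.eval t1 x else DTree.eval t0 x

def DTree.depth {n : ℕ} : DTree n → ℕ
  | .leaf _ => 0
  | .node _ t0 t1 => max (DTree.depth t0) (DTree.depth t1) + 1

/-- Error of a decision tree w.r.t. the input distribution `μ`. -/
def qErr {n : ℕ} (μ : (Fin n → Bool) → ℝ) (g : (Fin n → Bool) → Bool) (T : DTree n) : ℝ :=
  ∑ x, if T.eval x ≠ g x then μ x else 0

/-- Distributional query complexity `QC^μ_ε(g)`: minimum depth of a deterministic decision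
tree erring with probability at most `ε` under `μ`. -/
def QCdist {n : ℕ} (μ : (Fin n → Bool) → ℝ) (g : (Fin n → Bool) → Bool) (ε : ℝ) : ℕ :=
  sInf {d : ℕ | ∃ T : DTree n, T.depth ≤ d ∧ qErr μ g T ≤ ε}

/-- A subcube of `{0,1}ⁿ`, given by its support pattern `s ∈ {0,1,⋆}ⁿ`. -/
abbrev Subcube (n : ℕ) := Fin n → Option Bool

/-- Membership in a subcube. -/
def memCube {n : ℕ} (A : Subcube n) (x : Fin n → Bool) : Prop :=
  ∀ i, ∀ b, A i = some b → x i = b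

/-- Size of (the support of) a subcube. -/
def cubeSize {n : ℕ} (A : Subcube n) : ℕ :=
  (Finset.univ.filter fun i => (A i).isSome).card

/-- Total weight of subcubes containing `x`. -/
def cubeCov {n : ℕ} (w : Subcube n → ℝ) (x : Fin n → Bool) : ℝ :=
  ∑ A : Subcube n, if memCube A x then w A else 0

/-- Query partition bound `qprt_ε(g)` (LP optimal value). -/
def qprt {n : ℕ} (g : (Fin n → Bool) → Bool) (ε : ℝ) : ℝ :=
  sInf { v : ℝ | ∃ w : Bool → Subcube n → ℝ,
    (∀ z A, 0 ≤ w z A) ∧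
    (∀ x, 1 - ε ≤ cubeCov (w (g x)) x) ∧
    (∀ x, cubeCov (w false) x + cubeCov (w true) x = 1) ∧
    v = ∑ A : Subcube n, (w false A + w true A) * 2 ^ cubeSize A }

/-- The bit-wise product distribution on `{0,1}ⁿ` with `p_i(1) = p i`, `p_i(0) = 1 - p i`. -/
def bitProd {n : ℕ} (p : Fin n → ℝ) : (Fin n → Bool) → ℝ :=
  fun x => ∏ i, if x i then p i else 1 - p i

/-- `μ(A)` for a subcube (or any set given by a membership predicate). -/
def cubeMass {n : ℕ} (μ : (Fin n → Bool) → ℝ) (A : Subcube n) : ℝ :=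
  ∑ x, if memCube A x then μ x else 0

/-- `μ_z(A) = μ(A ∩ g⁻¹(z))` for a subcube `A`. -/
def cubeMassZ {n : ℕ} (μ : (Fin n → Bool) → ℝ) (g : (Fin n → Bool) → Bool)
    (z : Bool) (A : Subcube n) : ℝ :=
  ∑ x, if memCube A x ∧ g x = z then μ x else 0

/-- `μ_z = μ(g⁻¹(z))`. -/
def qTotalZ {n : ℕ} (μ : (Fin n → Bool) → ℝ) (g : (Fin n → Bool) → Bool) (z : Bool) : ℝ :=
  ∑ x, if g x = z then μ x else 0

/-- Mass of a finite set of pairs under the product measure `μA ⊗ μB`. -/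
def pairMass {X Y : Type} (μA : X → ℝ) (μB : Y → ℝ) (A : Finset (X × Y)) : ℝ :=
  ∑ q ∈ A, μA q.1 * μB q.2

end

/-- **Claim 3.6 (subcubes with disjoint support are negligible).** Let `μ = bitProd p` be
a bit-wise product distribution, `A` a subcube with `μ₁(A) ≤ δ·μ₀(A)` and `μ(A) > 0`,
and `w` nonnegative weights on subcubes with `Σ_{R∋x} w_R ≤ 1` for all `x` and
`Σ_{R∋x} w_R ≤ β₁` for all `x ∈ f⁻¹(0)`. Then summing over subcubes `B` whose support is
disjoint from that of `A`, `Σ_B μ₁(B)·w_B ≤ β₁ + δ`. -/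
theorem disjoint_support_negligible {n : ℕ} (δ β1 : ℝ) (hδ : 0 < δ)
    (f : (Fin n → Bool) → Bool) (p : Fin n → ℝ) (hp : ∀ i, 0 ≤ p i ∧ p i ≤ 1)
    (A : Subcube n)
    (hbias : cubeMassZ (bitProd p) f true A ≤ δ * cubeMassZ (bitProd p) f false A)
    (hApos : 0 < cubeMass (bitProd p) A)
    (w : Subcube n → ℝ) (hw0 : ∀ B, 0 ≤ w B)
    (hone : ∀ x, cubeCov w x ≤ 1)
    (hpack : ∀ x, f x = false → cubeCov w x ≤ β1) :
    (∑ B : Subcube n, if ∀ i, A i = none ∨ B i = none then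
        cubeMassZ (bitProd p) f true B * w B else 0) ≤ β1 + δ := by
    classical
  set μ : (Fin n → Bool) → ℝ := bitProd p with hμdef
  set c : Fin n → Bool → ℝ := fun i b => if b then p i else 1 - p i with hc
  have hμprod : ∀ x, μ x = ∏ i, c i (x i) := fun x => rfl
  have hcnn : ∀ i b, 0 ≤ c i b := by
    intro i b; cases b <;> simp [hc, (hp i).1, (hp i).2, sub_nonneg]
  have hμnn : ∀ x, 0 ≤ μ x := fun x => Finset.prod_nonneg fun i _ => hcnn i (x i)
  have hcsum : ∀ i, c i true + c i false = 1 := by intro i; simp [hc]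
  have hcovnn : ∀ x, 0 ≤ cubeCov w x := by
    intro x
    exact Finset.sum_nonneg fun B _ => by by_cases h : memCube B x <;> simp [h, hw0 B]
  -- the map sending x into A
  set T : (Fin n → Bool) → (Fin n → Bool) := fun x i => (A i).getD (x i) with hT
  have hTA : ∀ x, memCube A (T x) := by intro x i b hb; simp [hT, hb]
  -- masses
  set M : ℝ := cubeMass μ A with hM
  set M0 : ℝ := cubeMassZ μ f false A with hM0
  set M1 : ℝ := cubeMassZ μ f true A with hM1
  have hM0nn : 0 ≤ M0 := Finset.sum_nonneg fun x _ => by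
    by_cases h : memCube A x ∧ f x = false <;> simp [h, hμnn x]
  have hM1nn : 0 ≤ M1 := Finset.sum_nonneg fun x _ => by
    by_cases h : memCube A x ∧ f x = true <;> simp [h, hμnn x]
  have hsplit : M = M0 + M1 := by
    rw [hM, hM0, hM1, cubeMass, cubeMassZ, cubeMassZ, ← Finset.sum_add_distrib]
    refine Finset.sum_congr rfl fun x _ => ?_
    by_cases hm : memCube A x
    · cases hfx : f x <;> simp [hm, hfx]
    · simp [hm]
  have hM0pos : 0 < M0 := by nlinarith [hApos, hsplit, hbias]
  -- β1 is nonnegative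
  have hβ1 : 0 ≤ β1 := by
    have : ∃ y, 0 < (if memCube A y ∧ f y = false then μ y else 0) := by
      by_contra hcon
      push_neg at hcon
      have : M0 ≤ 0 := Finset.sum_nonpos fun y _ => hcon y
      linarith
    obtain ⟨y, hy⟩ := this
    by_cases h : memCube A y ∧ f y = false
    · exact le_trans (hcovnn y) (hpack y h.2)
    · simp [h] at hy
  -- the bound function
  set h : (Fin n → Bool) → ℝ := fun y => if f y = false then β1 else 1 with hh
  have hhnn : ∀ y, 0 ≤ h y := by
    intro y; by_cases hf : f y = false <;> simp [hh, hf, hβ1]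
  -- key pushforward identity
  have fiber : ∀ y, (∑ x, if T x = y then μ x else 0) * M =
      (if memCube A y then μ y else 0) := by
    intro y
    by_cases hy : memCube A y
    · rw [if_pos hy]
      have e1 : (∑ x, if T x = y then μ x else 0)
          = ∏ i, ∑ b : Bool, (if (A i).getD b = y i then c i b else 0) := by
        rw [Fintype.prod_sum (fun i b => if (A i).getD b = y i then c i b else 0)]
        refine Finset.sum_congr rfl fun x _ => ?_
        by_cases hxy : T x = y
        · rw [if_pos hxy, hμprod]
          refine Finset.prod_congr rfl fun i _ => ?_
          rw [if_pos (congrFun hxy i)]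
        · rw [if_neg hxy]
          have : ∃ i, ¬((A i).getD (x i) = y i) := by
            by_contra hcon
            push_neg at hcon
            exact hxy (funext hcon)
          obtain ⟨i, hi⟩ := this
          exact (Finset.prod_eq_zero (Finset.mem_univ i) (by rw [if_neg hi])).symm
      have e2 : M = ∏ i, ∑ b : Bool, (if (∀ b', A i = some b' → b = b') then c i b else 0) := by
        rw [hM, cubeMass,
          Fintype.prod_sum (fun i b => if (∀ b', A i = some b' → b = b') then c i b else 0)]
        refine Finset.sum_congr rfl fun x _ => ?_
        by_cases hm : memCube A x
        · rw [if_pos hm, hμprod]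
          refine Finset.prod_congr rfl fun i _ => ?_
          rw [if_pos (hm i)]
        · rw [if_neg hm]
          have : ∃ i, ¬(∀ b', A i = some b' → x i = b') := by
            by_contra hcon
            push_neg at hcon
            exact hm hcon
          obtain ⟨i, hi⟩ := this
          exact (Finset.prod_eq_zero (Finset.mem_univ i) (by rw [if_neg hi])).symm
      rw [e1, e2, ← Finset.prod_mul_distrib, hμprod]
      refine Finset.prod_congr rfl fun i _ => ?_
      cases hAi : A i with
      | none =>
          cases hyi : y i <;>
            simp [Fintype.sum_bool, hyi, hc]
      | some b0 =>
          have hyb : y i = b0 := hy i b0 hAi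
          cases b0 <;> cases hb' : y i <;>
            simp_all [Fintype.sum_bool, hc]
    · rw [if_neg hy]
      have : ∀ x, (if T x = y then μ x else 0) = 0 := by
        intro x
        rw [if_neg]
        intro hxy
        exact hy (hxy ▸ hTA x)
      simp [this]
  have key : (∑ x, μ x * h (T x)) * M = ∑ y, (if memCube A y then μ y * h y else 0) := by
    have e1 : (∑ x, μ x * h (T x)) = ∑ y, (∑ x, if T x = y then μ x else 0) * h y := by
      have : ∀ x, μ x * h (T x) = ∑ y, (if T x = y then μ x * h y else 0) := by
        intro x
        rw [Finset.sum_ite_eq Finset.univ (T x) (fun y => μ x * h y)]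
        simp
      rw [Finset.sum_congr rfl fun x _ => this x, Finset.sum_comm]
      refine Finset.sum_congr rfl fun y _ => ?_
      rw [Finset.sum_mul]
      exact Finset.sum_congr rfl fun x _ => by rw [ite_mul, zero_mul]
    rw [e1, Finset.sum_mul]
    refine Finset.sum_congr rfl fun y _ => ?_
    rw [mul_right_comm, fiber y, ite_mul, zero_mul]
  -- evaluate the right side of key
  have keyval : (∑ y, (if memCube A y then μ y * h y else 0)) = β1 * M0 + M1 := by
    rw [hM0, hM1, cubeMassZ, cubeMassZ, Finset.mul_sum, ← Finset.sum_add_distrib]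
    refine Finset.sum_congr rfl fun y _ => ?_
    by_cases hm : memCube A y
    · cases hfy : f y <;> simp [hm, hfy, hh, mul_comm]
    · simp [hm]
  -- main chain
  have main : (∑ B : Subcube n, if ∀ i, A i = none ∨ B i = none then
      cubeMassZ μ f true B * w B else 0) ≤ ∑ x, μ x * h (T x) := by
    have swap : (∑ B : Subcube n, if ∀ i, A i = none ∨ B i = none then
        cubeMassZ μ f true B * w B else 0)
        = ∑ x, ∑ B : Subcube n,
          (if (∀ i, A i = none ∨ B i = none) ∧ memCube B x ∧ f x = true
            then μ x * w B else 0) := by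
      rw [Finset.sum_comm]
      refine Finset.sum_congr rfl fun B _ => ?_
      by_cases hd : ∀ i, A i = none ∨ B i = none
      · rw [if_pos hd, cubeMassZ, Finset.sum_mul]
        refine Finset.sum_congr rfl fun x _ => ?_
        by_cases hm : memCube B x ∧ f x = true <;> simp [hd, hm]
      · simp [hd]
    rw [swap]
    refine Finset.sum_le_sum fun x _ => ?_
    by_cases hfx : f x = true
    · have step1 : (∑ B : Subcube n,
          (if (∀ i, A i = none ∨ B i = none) ∧ memCube B x ∧ f x = true
            then μ x * w B else 0)) ≤ μ x * cubeCov w (T x) := by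
        rw [cubeCov, Finset.mul_sum]
        refine Finset.sum_le_sum fun B _ => ?_
        by_cases hcond : (∀ i, A i = none ∨ B i = none) ∧ memCube B x ∧ f x = true
        · rw [if_pos hcond]
          have hmem : memCube B (T x) := by
            intro i b hb
            rcases hcond.1 i with hA | hB
            · have : T x i = x i := by simp [hT, hA]
              rw [this]; exact hcond.2.1 i b hb
            · rw [hB] at hb; exact absurd hb (by simp)
          rw [if_pos hmem]
        · rw [if_neg hcond]
          by_cases hm : memCube B (T x)
          · rw [if_pos hm]; exact mul_nonneg (hμnn x) (hw0 B)
          · rw [if_neg hm, mul_zero]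
      refine le_trans step1 ?_
      refine mul_le_mul_of_nonneg_left ?_ (hμnn x)
      by_cases hfT : f (T x) = false
      · simp only [hh]; rw [if_pos hfT]; exact hpack (T x) hfT
      · simp only [hh]; rw [if_neg hfT]; exact hone (T x)
    · have : ∀ B : Subcube n,
          (if (∀ i, A i = none ∨ B i = none) ∧ memCube B x ∧ f x = true
            then μ x * w B else 0) = 0 := by
        intro B; rw [if_neg]; rintro ⟨-, -, h⟩; exact hfx h
      rw [Finset.sum_congr rfl fun B _ => this B, Finset.sum_const, smul_zero]
      exact mul_nonneg (hμnn x) (hhnn (T x))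
  refine le_trans main ?_
  have hfinal : (∑ x, μ x * h (T x)) * M ≤ (β1 + δ) * M := by
    rw [key, keyval]
    nlinarith [hbias, hM0nn, hM1nn, hsplit, hβ1, hδ.le]
  exact le_of_mul_le_mul_right (by linarith [hfinal]) hApos
end

section
/- There is a universal constant C > 0 such that for every f : {0,1}^n × {0,1}^n → {0,1} and every δ ∈ (0, 1/8): log prt_δ(f) ≤ C · log(1/δ) · log prt_{1/8}(f). -/
open scoped BigOperators
open scoped Classical

noncomputable section AuxErrRed

section Amplify
variable {X Y : Type} [Fintype X] [Fintype Y]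

/-- intersection of the rectangles in a tuple -/
def tupleInter {k : ℕ} (t : Fin k → Bool × Finset X × Finset Y) : Finset X × Finset Y :=
  (Finset.univ.filter fun x => ∀ i, x ∈ (t i).2.1,
   Finset.univ.filter fun y => ∀ i, y ∈ (t i).2.2)

/-- majority vote of the booleans in a tuple -/
def tupleMaj {k : ℕ} {R : Type} (t : Fin k → Bool × R) : Bool :=
  decide (k ≤ 2 * (Finset.univ.filter fun i => (t i).1 = true).card)

lemma mem_tupleInter {k : ℕ} (t : Fin k → Bool × Finset X × Finset Y) (x : X) (y : Y) :
    (x ∈ (tupleInter t).1 ∧ y ∈ (tupleInter t).2) ↔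
      ∀ i, x ∈ (t i).2.1 ∧ y ∈ (t i).2.2 := by
  simp [tupleInter, forall_and]

lemma tupleMaj_wrong {k : ℕ} {R : Type} (t : Fin k → Bool × R) (z : Bool)
    (h : tupleMaj t ≠ z) :
    k ≤ 2 * (Finset.univ.filter fun i => (t i).1 ≠ z).card := by
  have hsplit := Finset.card_filter_add_card_filter_not
    (s := (Finset.univ : Finset (Fin k))) (p := fun i => (t i).1 = true)
  simp only [Finset.card_univ, Fintype.card_fin] at hsplit
  cases z with
  | true =>
    have : ¬ (k ≤ 2 * (Finset.univ.filter fun i => (t i).1 = true).card) := by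
      simpa [tupleMaj] using h
    have h2 : 2 * (Finset.univ.filter fun i => (t i).1 = true).card < k :=
      Nat.lt_of_not_le this
    have : (Finset.univ.filter fun i => ¬ (t i).1 = true).card
        = k - (Finset.univ.filter fun i => (t i).1 = true).card := by omega
    simp only [ne_eq]
    omega
  | false =>
    have : k ≤ 2 * (Finset.univ.filter fun i => (t i).1 = true).card := by
      by_contra hc
      exact h (by simp [tupleMaj, hc])
    have heq : (Finset.univ.filter fun i => (t i).1 ≠ false)
        = (Finset.univ.filter fun i => (t i).1 = true) := by
      apply Finset.filter_congr; intro i _; simp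
    rw [heq]; exact this

/-- amplified weight function -/
def ampW (w : Bool → Finset X × Finset Y → ℝ) (k : ℕ) :
    Bool → Finset X × Finset Y → ℝ :=
  fun z R => ∑ t : Fin k → Bool × Finset X × Finset Y,
    if tupleMaj t = z ∧ tupleInter t = R then ∏ i, w (t i).1 (t i).2 else 0

lemma sum_ite_eq_of_eq {α : Type} [Fintype α] [DecidableEq α] (a : α)
    (p : α → Prop) [DecidablePred p] (c : ℝ) :
    (∑ b : α, if p b ∧ a = b then c else 0) = if p a then c else 0 := by
  rw [Finset.sum_eq_single a]
  · simp
  · intro b _ hb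
    exact if_neg fun h => hb h.2.symm
  · simp

lemma prod_ite_all {k : ℕ} {β : Type} (Q : Fin k → β → Prop) [∀ i b, Decidable (Q i b)]
    (g : β → ℝ) (t : Fin k → β) :
    (∏ i, if Q i (t i) then g (t i) else 0)
      = if (∀ i, Q i (t i)) then ∏ i, g (t i) else 0 := by
  by_cases h : ∀ i, Q i (t i)
  · rw [if_pos h]
    exact Finset.prod_congr rfl fun i _ => if_pos (h i)
  · push_neg at h
    obtain ⟨i, hi⟩ := h
    rw [if_neg (by push_neg; exact ⟨i, hi⟩)]
    exact Finset.prod_eq_zero (Finset.mem_univ i) (by simp [hi])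

lemma sum_tuple_prod {k : ℕ} {β : Type} [Fintype β] (Q : Fin k → β → Prop)
    [∀ i b, Decidable (Q i b)] (g : β → ℝ) :
    (∑ t : Fin k → β, if (∀ i, Q i (t i)) then ∏ i, g (t i) else 0)
      = ∏ i, ∑ b, if Q i b then g b else 0 := by
  rw [Finset.prod_univ_sum]
  rw [Fintype.piFinset_univ]
  exact Finset.sum_congr rfl fun t _ => (prod_ite_all Q g t).symm

end Amplify

section Main
variable {X Y : Type} [Fintype X] [Fintype Y]

lemma rcov_ampW (w : Bool → Finset X × Finset Y → ℝ) (k : ℕ) (z : Bool) (x : X) (y : Y) :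
    rcov (ampW w k z) x y
      = ∑ t : Fin k → Bool × Finset X × Finset Y,
          if tupleMaj t = z ∧ (∀ i, x ∈ (t i).2.1 ∧ y ∈ (t i).2.2)
          then ∏ i, w (t i).1 (t i).2 else 0 := by
  unfold rcov ampW
  have step1 : ∀ R : Finset X × Finset Y,
      (if x ∈ R.1 ∧ y ∈ R.2 then
          (∑ t : Fin k → Bool × Finset X × Finset Y,
            if tupleMaj t = z ∧ tupleInter t = R then ∏ i, w (t i).1 (t i).2 else 0)
        else 0)
      = ∑ t : Fin k → Bool × Finset X × Finset Y,
          if (tupleMaj t = z ∧ (x ∈ R.1 ∧ y ∈ R.2)) ∧ tupleInter t = R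
          then ∏ i, w (t i).1 (t i).2 else 0 := by
    intro R
    by_cases h : x ∈ R.1 ∧ y ∈ R.2
    · rw [if_pos h]
      refine Finset.sum_congr rfl fun t _ => ?_
      by_cases h2 : tupleMaj t = z ∧ tupleInter t = R
      · rw [if_pos h2, if_pos ⟨⟨h2.1, h⟩, h2.2⟩]
      · rw [if_neg h2, if_neg (fun hc => h2 ⟨hc.1.1, hc.2⟩)]
    · rw [if_neg h]
      symm
      refine Finset.sum_eq_zero fun t _ => if_neg (fun hc => h hc.1.2)
  rw [Finset.sum_congr rfl fun R _ => step1 R, Finset.sum_comm]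
  refine Finset.sum_congr rfl fun t _ => ?_
  have := sum_ite_eq_of_eq (tupleInter t)
    (fun R : Finset X × Finset Y => tupleMaj t = z ∧ (x ∈ R.1 ∧ y ∈ R.2))
    (∏ i, w (t i).1 (t i).2)
  rw [show (∑ R : Finset X × Finset Y,
      if (tupleMaj t = z ∧ (x ∈ R.1 ∧ y ∈ R.2)) ∧ tupleInter t = R
      then ∏ i, w (t i).1 (t i).2 else 0) =
      (∑ R : Finset X × Finset Y,
      if (fun R : Finset X × Finset Y => tupleMaj t = z ∧ (x ∈ R.1 ∧ y ∈ R.2)) R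
        ∧ tupleInter t = R
      then ∏ i, w (t i).1 (t i).2 else 0) from rfl, this]
  by_cases hm : tupleMaj t = z ∧ (x ∈ (tupleInter t).1 ∧ y ∈ (tupleInter t).2)
  · rw [if_pos hm, if_pos ⟨hm.1, (mem_tupleInter t x y).mp hm.2⟩]
  · rw [if_neg hm]
    refine (if_neg fun hc => hm ⟨hc.1, (mem_tupleInter t x y).mpr hc.2⟩).symm

/-- the single-sample mass of pairs containing (x,y) equals rcov false + rcov true -/
lemma pair_sum_eq (w : Bool → Finset X × Finset Y → ℝ) (x : X) (y : Y) :
    (∑ p : Bool × Finset X × Finset Y, if x ∈ p.2.1 ∧ y ∈ p.2.2 then w p.1 p.2 else 0)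
      = rcov (w false) x y + rcov (w true) x y := by
  rw [Fintype.sum_prod_type, Fintype.sum_bool]
  rw [add_comm]
  rfl

lemma rcov_ampW_add (w : Bool → Finset X × Finset Y → ℝ) (k : ℕ) (x : X) (y : Y) :
    rcov (ampW w k false) x y + rcov (ampW w k true) x y
      = (rcov (w false) x y + rcov (w true) x y) ^ k := by
  rw [rcov_ampW, rcov_ampW, ← Finset.sum_add_distrib]
  have step : ∀ t : Fin k → Bool × Finset X × Finset Y,
      ((if tupleMaj t = false ∧ (∀ i, x ∈ (t i).2.1 ∧ y ∈ (t i).2.2)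
        then ∏ i, w (t i).1 (t i).2 else 0)
      + (if tupleMaj t = true ∧ (∀ i, x ∈ (t i).2.1 ∧ y ∈ (t i).2.2)
        then ∏ i, w (t i).1 (t i).2 else 0))
      = if (∀ i, (fun _ (p : Bool × Finset X × Finset Y) => x ∈ p.2.1 ∧ y ∈ p.2.2) i (t i))
        then ∏ i, w (t i).1 (t i).2 else 0 := by
    intro t
    by_cases hM : ∀ i, x ∈ (t i).2.1 ∧ y ∈ (t i).2.2
    · cases hmaj : tupleMaj t <;> simp [hM, hmaj]
    · simp [hM]
  rw [Finset.sum_congr rfl fun t _ => step t,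
    sum_tuple_prod (fun _ (p : Bool × Finset X × Finset Y) => x ∈ p.2.1 ∧ y ∈ p.2.2)
      (fun p => w p.1 p.2)]
  rw [Finset.prod_congr rfl fun (i : Fin k) _ => pair_sum_eq w x y]
  rw [Finset.prod_const, Finset.card_univ, Fintype.card_fin]

end Main

section Main2
variable {X Y : Type} [Fintype X] [Fintype Y]

lemma ampW_nonneg (w : Bool → Finset X × Finset Y → ℝ) (hpos : ∀ z R, 0 ≤ w z R)
    (k : ℕ) (z : Bool) (R : Finset X × Finset Y) : 0 ≤ ampW w k z R := by
  refine Finset.sum_nonneg fun t _ => ?_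
  have : (0:ℝ) ≤ ∏ i, w (t i).1 (t i).2 := Finset.prod_nonneg fun i _ => hpos _ _
  by_cases h : tupleMaj t = z ∧ tupleInter t = R <;> simp [h, this]

/-- the wrong-answer single-sample mass -/
lemma pair_sum_wrong (w : Bool → Finset X × Finset Y → ℝ) (z : Bool) (x : X) (y : Y) :
    (∑ p : Bool × Finset X × Finset Y,
        if p.1 ≠ z ∧ (x ∈ p.2.1 ∧ y ∈ p.2.2) then w p.1 p.2 else 0)
      = rcov (w (!z)) x y := by
  rw [Fintype.sum_prod_type, Fintype.sum_bool]
  cases z <;> simp [rcov]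

lemma ampW_err (w : Bool → Finset X × Finset Y → ℝ) (hpos : ∀ z R, 0 ≤ w z R)
    (hsum1 : ∀ x y, rcov (w false) x y + rcov (w true) x y = 1)
    (k : ℕ) (z : Bool) (x : X) (y : Y)
    (ha : rcov (w (!z)) x y ≤ 1/8) :
    rcov (ampW w k (!z)) x y ≤ (2:ℝ) ^ k * (1/8) ^ ((k+1)/2) := by
  classical
  set m := (k+1)/2 with hm
  have hga : ∀ t : Fin k → Bool × Finset X × Finset Y, 0 ≤ ∏ i, w (t i).1 (t i).2 :=
    fun t => Finset.prod_nonneg fun i _ => hpos _ _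
  have ha0 : 0 ≤ rcov (w (!z)) x y := by
    refine Finset.sum_nonneg fun R _ => ?_
    by_cases h : x ∈ R.1 ∧ y ∈ R.2 <;> simp [h, hpos]
  rw [rcov_ampW]
  -- fiber decomposition over the wrong-set
  have hfib : (∑ t : Fin k → Bool × Finset X × Finset Y,
      if tupleMaj t = !z ∧ (∀ i, x ∈ (t i).2.1 ∧ y ∈ (t i).2.2)
      then ∏ i, w (t i).1 (t i).2 else 0)
      = ∑ S : Finset (Fin k), ∑ t : Fin k → Bool × Finset X × Finset Y,
          if (Finset.univ.filter fun i => (t i).1 ≠ z) = S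
              ∧ (tupleMaj t = !z ∧ (∀ i, x ∈ (t i).2.1 ∧ y ∈ (t i).2.2))
          then ∏ i, w (t i).1 (t i).2 else 0 := by
    rw [← Finset.sum_fiberwise (Finset.univ : Finset (Fin k → Bool × Finset X × Finset Y))
      (fun t => Finset.univ.filter fun i => (t i).1 ≠ z)
      (fun t => if tupleMaj t = !z ∧ (∀ i, x ∈ (t i).2.1 ∧ y ∈ (t i).2.2)
        then ∏ i, w (t i).1 (t i).2 else 0)]
    refine Finset.sum_congr rfl fun S _ => ?_
    rw [Finset.sum_filter]
    refine Finset.sum_congr rfl fun t _ => ?_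
    by_cases h1 : (Finset.univ.filter fun i => (t i).1 ≠ z) = S <;>
      by_cases h2 : tupleMaj t = !z ∧ (∀ i, x ∈ (t i).2.1 ∧ y ∈ (t i).2.2) <;>
      simp [h1, h2]
  rw [hfib]
  -- bound each fiber
  have hfiber_bound : ∀ S : Finset (Fin k),
      (∑ t : Fin k → Bool × Finset X × Finset Y,
          if (Finset.univ.filter fun i => (t i).1 ≠ z) = S
              ∧ (tupleMaj t = !z ∧ (∀ i, x ∈ (t i).2.1 ∧ y ∈ (t i).2.2))
          then ∏ i, w (t i).1 (t i).2 else 0) ≤ (1/8 : ℝ) ^ m := by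
    intro S
    by_cases hS : k ≤ 2 * S.card
    · -- relax to: all coordinates in S are wrong, all contain (x,y)
      have hrel : (∑ t : Fin k → Bool × Finset X × Finset Y,
          if (Finset.univ.filter fun i => (t i).1 ≠ z) = S
              ∧ (tupleMaj t = !z ∧ (∀ i, x ∈ (t i).2.1 ∧ y ∈ (t i).2.2))
          then ∏ i, w (t i).1 (t i).2 else 0)
          ≤ ∑ t : Fin k → Bool × Finset X × Finset Y,
            if (∀ i, (i ∈ S → (t i).1 ≠ z) ∧ (x ∈ (t i).2.1 ∧ y ∈ (t i).2.2))
            then ∏ i, w (t i).1 (t i).2 else 0 := by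
        refine Finset.sum_le_sum fun t _ => ?_
        by_cases hc : (Finset.univ.filter fun i => (t i).1 ≠ z) = S
              ∧ (tupleMaj t = !z ∧ (∀ i, x ∈ (t i).2.1 ∧ y ∈ (t i).2.2))
        · rw [if_pos hc, if_pos]
          intro i
          refine ⟨fun hi => ?_, hc.2.2 i⟩
          rw [← hc.1] at hi
          exact (Finset.mem_filter.mp hi).2
        · rw [if_neg hc]
          by_cases hd : (∀ i, (i ∈ S → (t i).1 ≠ z) ∧ (x ∈ (t i).2.1 ∧ y ∈ (t i).2.2))
          · rw [if_pos hd]; exact hga t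
          · rw [if_neg hd]
      refine hrel.trans ?_
      rw [sum_tuple_prod (fun (i : Fin k) (p : Bool × Finset X × Finset Y) =>
        (i ∈ S → p.1 ≠ z) ∧ (x ∈ p.2.1 ∧ y ∈ p.2.2)) (fun p => w p.1 p.2)]
      have hfac : ∀ i : Fin k,
          (∑ p : Bool × Finset X × Finset Y,
            if (i ∈ S → p.1 ≠ z) ∧ (x ∈ p.2.1 ∧ y ∈ p.2.2) then w p.1 p.2 else 0)
          = if i ∈ S then rcov (w (!z)) x y
            else 1 := by
        intro i
        by_cases hi : i ∈ S
        · rw [if_pos hi, ← pair_sum_wrong w z x y]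
          exact Finset.sum_congr rfl fun p _ => by simp [hi]
        · rw [if_neg hi, ← hsum1 x y, ← pair_sum_eq w x y]
          exact Finset.sum_congr rfl fun p _ => by simp [hi]
      rw [Finset.prod_congr rfl fun i _ => hfac i]
      have hprod : (∏ i : Fin k, if i ∈ S then rcov (w (!z)) x y else (1:ℝ))
          = rcov (w (!z)) x y ^ S.card := by
        rw [Finset.prod_ite, Finset.prod_const, Finset.prod_const, one_pow, mul_one]
        congr 1
        simp
      rw [hprod]
      have h1 : rcov (w (!z)) x y ^ S.card ≤ (1/8 : ℝ) ^ S.card :=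
        pow_le_pow_left₀ ha0 ha S.card
      refine h1.trans (pow_le_pow_of_le_one (by norm_num) (by norm_num) ?_)
      omega
    · -- no tuple satisfies the condition
      refine le_trans (le_of_eq (Finset.sum_eq_zero fun t _ => ?_)) (by positivity)
      refine if_neg fun hc => ?_
      have := tupleMaj_wrong t z (by rw [hc.2.1]; cases z <;> simp)
      rw [hc.1] at this
      exact hS this
  calc (∑ S : Finset (Fin k), ∑ t : Fin k → Bool × Finset X × Finset Y,
          if (Finset.univ.filter fun i => (t i).1 ≠ z) = S
              ∧ (tupleMaj t = !z ∧ (∀ i, x ∈ (t i).2.1 ∧ y ∈ (t i).2.2))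
          then ∏ i, w (t i).1 (t i).2 else 0)
      ≤ ∑ _S : Finset (Fin k), (1/8 : ℝ) ^ m :=
        Finset.sum_le_sum fun S _ => hfiber_bound S
    _ = (2:ℝ) ^ k * (1/8) ^ m := by
        rw [Finset.sum_const, Finset.card_univ, Fintype.card_finset, Fintype.card_fin,
          nsmul_eq_mul]
        push_cast
        ring

end Main2

section Main3
variable {X Y : Type} [Fintype X] [Fintype Y]

lemma ampW_total (w : Bool → Finset X × Finset Y → ℝ) (k : ℕ) :
    (∑ R : Finset X × Finset Y, (ampW w k false R + ampW w k true R))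
      = (∑ R : Finset X × Finset Y, (w false R + w true R)) ^ k := by
  have hz : ∀ z : Bool, (∑ R : Finset X × Finset Y, ampW w k z R)
      = ∑ t : Fin k → Bool × Finset X × Finset Y,
          if tupleMaj t = z then ∏ i, w (t i).1 (t i).2 else 0 := by
    intro z
    unfold ampW
    rw [Finset.sum_comm]
    refine Finset.sum_congr rfl fun t _ => ?_
    have := sum_ite_eq_of_eq (tupleInter t)
      (fun _ : Finset X × Finset Y => tupleMaj t = z) (∏ i, w (t i).1 (t i).2)
    simpa using this
  rw [Finset.sum_add_distrib, hz false, hz true, ← Finset.sum_add_distrib]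
  have step : ∀ t : Fin k → Bool × Finset X × Finset Y,
      ((if tupleMaj t = false then ∏ i, w (t i).1 (t i).2 else 0)
        + (if tupleMaj t = true then ∏ i, w (t i).1 (t i).2 else 0))
      = if (∀ i : Fin k, (fun _ (_ : Bool × Finset X × Finset Y) => True) i (t i))
        then ∏ i, w (t i).1 (t i).2 else 0 := by
    intro t
    cases hmaj : tupleMaj t <;> simp [hmaj]
  rw [Finset.sum_congr rfl fun t _ => step t,
    sum_tuple_prod (fun _ (_ : Bool × Finset X × Finset Y) => True) (fun p => w p.1 p.2)]
  have hone : (∑ p : Bool × Finset X × Finset Y, if True then w p.1 p.2 else 0)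
      = ∑ R : Finset X × Finset Y, (w false R + w true R) := by
    simp only [if_true]
    rw [Fintype.sum_prod_type, Fintype.sum_bool, ← Finset.sum_add_distrib]
    exact Finset.sum_congr rfl fun R _ => add_comm _ _
  rw [Finset.prod_congr rfl fun (i : Fin k) _ => hone,
    Finset.prod_const, Finset.card_univ, Fintype.card_fin]

/-- Full amplification: from a feasible solution with error 1/8 to one with error
`2^k (1/8)^⌈k/2⌉` whose value is the k-th power. -/
lemma amplify (f : X → Y → Bool) (w : Bool → Finset X × Finset Y → ℝ)
    (hpos : ∀ z R, 0 ≤ w z R)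
    (hcov : ∀ x y, 1 - 1/8 ≤ rcov (w (f x y)) x y)
    (hsum1 : ∀ x y, rcov (w false) x y + rcov (w true) x y = 1)
    (k : ℕ) (δ : ℝ) (hδ : (2:ℝ) ^ k * (1/8) ^ ((k+1)/2) ≤ δ) :
    ∃ w' : Bool → Finset X × Finset Y → ℝ,
      (∀ z R, 0 ≤ w' z R) ∧
      (∀ x y, 1 - δ ≤ rcov (w' (f x y)) x y) ∧
      (∀ x y, rcov (w' false) x y + rcov (w' true) x y = 1) ∧
      (∑ R : Finset X × Finset Y, (w' false R + w' true R))
        = (∑ R : Finset X × Finset Y, (w false R + w true R)) ^ k := by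
  refine ⟨ampW w k, ampW_nonneg w hpos k, ?_, ?_, ampW_total w k⟩
  · intro x y
    have hsum' : rcov (ampW w k false) x y + rcov (ampW w k true) x y = 1 := by
      rw [rcov_ampW_add, hsum1 x y, one_pow]
    have ha : rcov (w (!(f x y))) x y ≤ 1/8 := by
      have := hcov x y
      have h2 := hsum1 x y
      cases hf : f x y <;> rw [hf] at this <;> simp only [Bool.not_false, Bool.not_true] <;>
        linarith
    have herr := ampW_err w hpos hsum1 k (f x y) x y ha
    have : rcov (ampW w k (!(f x y))) x y ≤ δ := herr.trans hδ
    have hsplit : rcov (ampW w k (f x y)) x y + rcov (ampW w k (!(f x y))) x y = 1 := by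
      cases hf : f x y <;> simp only [Bool.not_false, Bool.not_true] <;> linarith
    linarith
  · intro x y
    rw [rcov_ampW_add, hsum1 x y, one_pow]

end Main3

section Prt
variable {X Y : Type} [Fintype X] [Fintype Y]

def prtSet (f : X → Y → Bool) (ε : ℝ) : Set ℝ :=
  { v : ℝ | ∃ w : Bool → Finset X × Finset Y → ℝ,
    (∀ z R, 0 ≤ w z R) ∧
    (∀ x y, 1 - ε ≤ rcov (w (f x y)) x y) ∧
    (∀ x y, rcov (w false) x y + rcov (w true) x y = 1) ∧
    v = ∑ R : Finset X × Finset Y, (w false R + w true R) }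

lemma prt_eq_sInf (f : X → Y → Bool) (ε : ℝ) : prt f ε = sInf (prtSet f ε) := rfl

lemma prtSet_one_le [Nonempty X] [Nonempty Y] (f : X → Y → Bool) (ε : ℝ) :
    ∀ v ∈ prtSet f ε, (1:ℝ) ≤ v := by
  rintro v ⟨w, hpos, _hcov, hsum, rfl⟩
  obtain ⟨x0⟩ := ‹Nonempty X›; obtain ⟨y0⟩ := ‹Nonempty Y›
  have h := hsum x0 y0
  unfold rcov at h
  rw [← Finset.sum_add_distrib] at h
  rw [← h]
  refine Finset.sum_le_sum fun R _ => ?_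
  by_cases hR : x0 ∈ R.1 ∧ y0 ∈ R.2 <;> simp [hR, add_nonneg (hpos false R) (hpos true R)]

lemma prtSet_nonempty (f : X → Y → Bool) (ε : ℝ) (hε : 0 ≤ ε) :
    (prtSet f ε).Nonempty := by
  classical
  set w : Bool → Finset X × Finset Y → ℝ := fun z R =>
    ∑ p : X × Y, if R = ({p.1}, {p.2}) ∧ f p.1 p.2 = z then 1 else 0 with hw
  have hrcov : ∀ (z : Bool) (x0 : X) (y0 : Y),
      rcov (w z) x0 y0 = if f x0 y0 = z then 1 else 0 := by
    intro z x0 y0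
    unfold rcov
    have step1 : ∀ R : Finset X × Finset Y,
        (if x0 ∈ R.1 ∧ y0 ∈ R.2 then w z R else 0)
        = ∑ p : X × Y,
            if (f p.1 p.2 = z ∧ (x0 ∈ R.1 ∧ y0 ∈ R.2)) ∧ ({p.1}, {p.2}) = R
            then (1:ℝ) else 0 := by
      intro R
      by_cases h : x0 ∈ R.1 ∧ y0 ∈ R.2
      · rw [if_pos h, hw]
        refine Finset.sum_congr rfl fun p _ => ?_
        by_cases h2 : R = ({p.1}, {p.2}) ∧ f p.1 p.2 = z
        · rw [if_pos h2, if_pos ⟨⟨h2.2, h⟩, h2.1.symm⟩]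
        · rw [if_neg h2, if_neg fun hc => h2 ⟨hc.2.symm, hc.1.1⟩]
      · rw [if_neg h]
        exact (Finset.sum_eq_zero fun p _ => if_neg fun hc => h hc.1.2).symm
    rw [Finset.sum_congr rfl fun R _ => step1 R, Finset.sum_comm]
    have step2 : ∀ p : X × Y,
        (∑ R : Finset X × Finset Y,
          if (f p.1 p.2 = z ∧ (x0 ∈ R.1 ∧ y0 ∈ R.2)) ∧ ({p.1}, {p.2}) = R
          then (1:ℝ) else 0)
        = if f p.1 p.2 = z ∧ (x0 = p.1 ∧ y0 = p.2) then (1:ℝ) else 0 := by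
      intro p
      rw [sum_ite_eq_of_eq (({p.1}, {p.2}) : Finset X × Finset Y)
        (fun R : Finset X × Finset Y => f p.1 p.2 = z ∧ (x0 ∈ R.1 ∧ y0 ∈ R.2)) 1]
      simp [eq_comm]
    rw [Finset.sum_congr rfl fun p _ => step2 p]
    have step3 : ∀ p : X × Y,
        (if f p.1 p.2 = z ∧ (x0 = p.1 ∧ y0 = p.2) then (1:ℝ) else 0)
        = if (fun q : X × Y => f q.1 q.2 = z) p ∧ (x0, y0) = p then (1:ℝ) else 0 := by
      intro p
      congr 1
      simp [Prod.ext_iff]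
    rw [Finset.sum_congr rfl fun p _ => step3 p,
      sum_ite_eq_of_eq ((x0, y0) : X × Y) (fun q : X × Y => f q.1 q.2 = z) 1]
  refine ⟨∑ R : Finset X × Finset Y, (w false R + w true R), w, ?_, ?_, ?_, rfl⟩
  · intro z R
    rw [hw]
    refine Finset.sum_nonneg fun p _ => ?_
    by_cases h : R = ({p.1}, {p.2}) ∧ f p.1 p.2 = z <;> simp [h]
  · intro x y
    rw [hrcov (f x y) x y, if_pos rfl]
    linarith
  · intro x y
    rw [hrcov false x y, hrcov true x y]
    cases f x y <;> simp

end Prt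

lemma logb_two_eight : Real.logb 2 8 = 3 := by
  rw [show (8:ℝ) = 2^(3:ℕ) by norm_num, Real.logb_pow]
  simp [Real.logb_self_eq_one]


end AuxErrRed

/-- **Claim B.4 (error reduction for the partition bound).** There is a universal
constant `C > 0` such that for every `f : {0,1}ⁿ × {0,1}ⁿ → {0,1}` and `δ ∈ (0,1/8)`,
`log prt_δ(f) ≤ C · log(1/δ) · log prt_{1/8}(f)`. -/
theorem prt_error_reduction :
    ∃ C : ℝ, 0 < C ∧
      ∀ (n : ℕ) (f : (Fin n → Bool) → (Fin n → Bool) → Bool) (δ : ℝ),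
        δ ∈ Set.Ioo (0 : ℝ) (1 / 8) →
        Real.logb 2 (prt f δ) ≤
          C * Real.logb 2 (1 / δ) * Real.logb 2 (prt f (1 / 8)) := by
  refine ⟨3, by norm_num, ?_⟩
  intro n f δ hδ
  obtain ⟨hδ0, hδ8⟩ := hδ
  set D := Real.logb 2 (1/δ) with hD
  have hδinv : (8:ℝ) ≤ 1/δ := by rw [le_div_iff₀ hδ0]; linarith
  have hD3 : 3 ≤ D := by
    rw [hD, ← logb_two_eight]
    exact (Real.logb_le_logb (by norm_num) (by norm_num) (by positivity)).mpr hδinv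
  set k := ⌈2 * D⌉₊ with hk
  have hk2D : 2 * D ≤ (k:ℝ) := Nat.le_ceil _
  have hk3D : (k:ℝ) ≤ 3 * D := by
    have := Nat.ceil_lt_add_one (a := 2*D) (by linarith)
    rw [← hk] at this
    linarith
  -- the error requirement
  have hδk : (2:ℝ) ^ k * (1/8) ^ ((k+1)/2) ≤ δ := by
    set m := (k+1)/2 with hm
    have hkm : k ≤ 2 * m := by omega
    have h18 : (1/8 : ℝ) = (2:ℝ) ^ (-3 : ℝ) := by
      have h23 : (2:ℝ) ^ (3:ℝ) = 8 := by
        rw [show (3:ℝ) = ((3:ℕ):ℝ) by norm_num, Real.rpow_natCast]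
        norm_num
      rw [Real.rpow_neg (by norm_num), h23]
      norm_num
    have hpows : (2:ℝ) ^ k * (1/8) ^ m = (2:ℝ) ^ ((k:ℝ) - 3 * m) := by
      rw [h18, ← Real.rpow_natCast 2 k, ← Real.rpow_natCast ((2:ℝ) ^ (-3:ℝ)) m,
        ← Real.rpow_mul (by norm_num), ← Real.rpow_add (by norm_num)]
      ring_nf
    rw [hpows]
    have hexp : (k:ℝ) - 3 * m ≤ -D := by
      have h2m : (k:ℝ) ≤ 2 * (m:ℝ) := by exact_mod_cast hkm
      have hmD : D ≤ (m:ℝ) := by linarith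
      linarith
    calc (2:ℝ) ^ ((k:ℝ) - 3 * m) ≤ (2:ℝ) ^ (-D) :=
          Real.rpow_le_rpow_of_exponent_le (by norm_num) hexp
      _ = δ := by
          rw [Real.rpow_neg (by norm_num), Real.rpow_logb (by norm_num) (by norm_num)
            (by positivity)]
          simp
  -- sets
  have hS8ne : (prtSet f (1/8)).Nonempty := prtSet_nonempty f (1/8) (by norm_num)
  have hS8lb := prtSet_one_le f (1/8 : ℝ)
  have hSδlb := prtSet_one_le f δ
  have hL1 : 1 ≤ prt f (1/8) := le_csInf hS8ne hS8lb
  have key : ∀ v ∈ prtSet f (1/8), prt f δ ≤ v ^ k := by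
    rintro v ⟨w, hpos, hcov, hsum, rfl⟩
    obtain ⟨w', h1, h2, h3, h4⟩ := amplify f w hpos hcov hsum k δ hδk
    have hmem : (∑ R : Finset (Fin n → Bool) × Finset (Fin n → Bool),
        (w false R + w true R)) ^ k ∈ prtSet f δ := ⟨w', h1, h2, h3, h4.symm⟩
    exact csInf_le ⟨1, hSδlb⟩ hmem
  have hle : prt f δ ≤ prt f (1/8) ^ k := by
    have cont : Filter.Tendsto (fun η : ℝ => (prt f (1/8) + η) ^ k)
        (nhdsWithin 0 (Set.Ioi 0)) (nhds (prt f (1/8) ^ k)) := by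
      have hc : Continuous fun η : ℝ => (prt f (1/8) + η) ^ k := by continuity
      have := (hc.tendsto 0).mono_left (nhdsWithin_le_nhds (s := Set.Ioi (0:ℝ)))
      simpa using this
    refine ge_of_tendsto cont ?_
    filter_upwards [self_mem_nhdsWithin] with η hη
    obtain ⟨v, hvS, hvlt⟩ := Real.lt_sInf_add_pos hS8ne hη
    refine (key v hvS).trans ?_
    exact pow_le_pow_left₀ (le_trans zero_le_one (hS8lb v hvS)) hvlt.le k
  have hδ1 : 1 ≤ prt f δ := le_csInf (prtSet_nonempty f δ hδ0.le) hSδlb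
  have hlogL : 0 ≤ Real.logb 2 (prt f (1/8)) := Real.logb_nonneg (by norm_num) hL1
  calc Real.logb 2 (prt f δ) ≤ Real.logb 2 (prt f (1/8) ^ k) :=
        (Real.logb_le_logb (by norm_num) (by linarith) (by positivity)).mpr hle
    _ = (k:ℝ) * Real.logb 2 (prt f (1/8)) := by rw [Real.logb_pow]
    _ ≤ 3 * D * Real.logb 2 (prt f (1/8)) :=
        mul_le_mul_of_nonneg_right hk3D hlogL
end

section
/- Let f : X × Y → {0,1} on finite sets X, Y, let μ be a distribution on X × Y, let ε, δ ∈ (0,1) and ρ ∈ (0,1), and let (w_R) be nonnegative weights on combinatorial rectangles satisfying: Σ_{(x,y)∈f^{-1}(0)} μ(x,y) Σ_{R∋(x,y)} w_R ≥ (1−ε)·μ_0 and Σ_{R∋(x,y)} w_R ≤ δ for all (x,y) ∈ f^{-1}(1). Call a rectangle R biased if μ_1(R) ≤ ρ·μ_0(R). Then Σ_{R biased} w_R · μ_0(R) ≥ (1−ε)·μ_0 − (δ/ρ)·μ_1. -/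
open scoped BigOperators
open scoped Classical

lemma fubini_rcov {X Y : Type} [Fintype X] [Fintype Y]
    (f : X → Y → Bool) (μ : X → Y → ℝ) (z : Bool) (w : Finset X × Finset Y → ℝ) :
    (∑ x, ∑ y, if f x y = z then μ x y * rcov w x y else 0) =
      ∑ R : Finset X × Finset Y, w R * rMassZ μ f z R := by
  have h : ∀ x y, (if f x y = z then μ x y * rcov w x y else 0) =
      ∑ R : Finset X × Finset Y,
        w R * (if (x ∈ R.1 ∧ y ∈ R.2) ∧ f x y = z then μ x y else 0) := by
    intro x y
    rw [rcov]
    split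
    · rw [Finset.mul_sum]
      refine Finset.sum_congr rfl fun R _ => ?_
      split <;> split <;> simp_all [mul_comm]
    · symm
      refine Finset.sum_eq_zero fun R _ => ?_
      split <;> simp_all
  simp only [h]
  calc (∑ x : X, ∑ y : Y, ∑ R : Finset X × Finset Y,
          w R * (if (x ∈ R.1 ∧ y ∈ R.2) ∧ f x y = z then μ x y else 0))
      = ∑ x : X, ∑ R : Finset X × Finset Y, ∑ y : Y,
          w R * (if (x ∈ R.1 ∧ y ∈ R.2) ∧ f x y = z then μ x y else 0) := by
        exact Finset.sum_congr rfl fun x _ => Finset.sum_comm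
    _ = ∑ R : Finset X × Finset Y, ∑ x : X, ∑ y : Y,
          w R * (if (x ∈ R.1 ∧ y ∈ R.2) ∧ f x y = z then μ x y else 0) :=
        Finset.sum_comm
    _ = ∑ R : Finset X × Finset Y, w R * rMassZ μ f z R := by
        refine Finset.sum_congr rfl fun R _ => ?_
        rw [rMassZ, Finset.mul_sum]
        exact Finset.sum_congr rfl fun x _ => by rw [Finset.mul_sum]

/-- **Inequality (16) in the proof of Lemma 2.4.** If `w` satisfies the `0`-side covering
constraint and the packing constraints `Σ_{R∋(x,y)} w_R ≤ δ` on `f⁻¹(1)`, then the total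
`w·μ₀`-weight of `ρ`-biased rectangles is at least `(1-ε)·μ₀ - (δ/ρ)·μ₁`. -/
theorem biased_weight_lower_bound {X Y : Type} [Fintype X] [Fintype Y]
    (f : X → Y → Bool) (μ : X → Y → ℝ) (hμ : IsDist2 μ)
    (ε δ ρ : ℝ) (hε : ε ∈ Set.Ioo (0 : ℝ) 1) (hδ : δ ∈ Set.Ioo (0 : ℝ) 1)
    (hρ : ρ ∈ Set.Ioo (0 : ℝ) 1)
    (w : Finset X × Finset Y → ℝ) (hw0 : ∀ R, 0 ≤ w R)
    (hcov : (1 - ε) * totalZ μ f false ≤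
      ∑ x, ∑ y, if f x y = false then μ x y * rcov w x y else 0)
    (hpack : ∀ x y, f x y = true → rcov w x y ≤ δ) :
    (1 - ε) * totalZ μ f false - (δ / ρ) * totalZ μ f true ≤
      ∑ R : Finset X × Finset Y,
        if rMassZ μ f true R ≤ ρ * rMassZ μ f false R then w R * rMassZ μ f false R
        else 0 := by
  obtain ⟨hμ0, -⟩ := hμ
  have hρ0 : 0 < ρ := hρ.1
  have hmass0 : ∀ R, 0 ≤ rMassZ μ f false R := fun R => by
    refine Finset.sum_nonneg fun x _ => Finset.sum_nonneg fun y _ => ?_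
    split <;> [exact hμ0 x y; exact le_rfl]
  have hmass1 : ∀ R, 0 ≤ rMassZ μ f true R := fun R => by
    refine Finset.sum_nonneg fun x _ => Finset.sum_nonneg fun y _ => ?_
    split <;> [exact hμ0 x y; exact le_rfl]
  -- total sum identity
  have key0 := fubini_rcov f μ false w
  have key1 := fubini_rcov f μ true w
  -- bound on the unbiased part
  have hsplit : (∑ R : Finset X × Finset Y, w R * rMassZ μ f false R) =
      (∑ R : Finset X × Finset Y,
        if rMassZ μ f true R ≤ ρ * rMassZ μ f false R then w R * rMassZ μ f false R else 0)
      + (∑ R : Finset X × Finset Y,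
        if rMassZ μ f true R ≤ ρ * rMassZ μ f false R then 0 else w R * rMassZ μ f false R) := by
    rw [← Finset.sum_add_distrib]
    refine Finset.sum_congr rfl fun R _ => ?_
    split <;> ring
  have hunbiased : (∑ R : Finset X × Finset Y,
      if rMassZ μ f true R ≤ ρ * rMassZ μ f false R then 0 else w R * rMassZ μ f false R)
      ≤ (δ / ρ) * totalZ μ f true := by
    have h1 : (∑ R : Finset X × Finset Y,
        if rMassZ μ f true R ≤ ρ * rMassZ μ f false R then 0 else w R * rMassZ μ f false R)
        ≤ ∑ R : Finset X × Finset Y, (1 / ρ) * (w R * rMassZ μ f true R) := by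
      refine Finset.sum_le_sum fun R _ => ?_
      split
      · exact mul_nonneg (by positivity) (mul_nonneg (hw0 R) (hmass1 R))
      · rename_i hR
        push_neg at hR
        have : rMassZ μ f false R ≤ (1 / ρ) * rMassZ μ f true R := by
          have h' := mul_le_mul_of_nonneg_left hR.le (by positivity : (0:ℝ) ≤ 1 / ρ)
          calc rMassZ μ f false R = (1 / ρ) * (ρ * rMassZ μ f false R) := by
                field_simp
            _ ≤ (1 / ρ) * rMassZ μ f true R := h'
        calc w R * rMassZ μ f false R ≤ w R * ((1 / ρ) * rMassZ μ f true R) :=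
              mul_le_mul_of_nonneg_left this (hw0 R)
          _ = (1 / ρ) * (w R * rMassZ μ f true R) := by ring
    have h2 : (∑ R : Finset X × Finset Y, w R * rMassZ μ f true R) ≤ δ * totalZ μ f true := by
      rw [← key1, totalZ, Finset.mul_sum]
      refine Finset.sum_le_sum fun x _ => ?_
      rw [Finset.mul_sum]
      refine Finset.sum_le_sum fun y _ => ?_
      split
      · rename_i hf
        have hc := hpack x y hf
        have hcnn : 0 ≤ rcov w x y := by
          refine Finset.sum_nonneg fun R _ => ?_
          split <;> [exact hw0 R; exact le_rfl]
        calc μ x y * rcov w x y ≤ μ x y * δ := mul_le_mul_of_nonneg_left hc (hμ0 x y)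
          _ = δ * μ x y := by ring
      · simp
    calc (∑ R : Finset X × Finset Y,
        if rMassZ μ f true R ≤ ρ * rMassZ μ f false R then 0 else w R * rMassZ μ f false R)
        ≤ ∑ R : Finset X × Finset Y, (1 / ρ) * (w R * rMassZ μ f true R) := h1
      _ = (1 / ρ) * ∑ R : Finset X × Finset Y, w R * rMassZ μ f true R := by
          rw [Finset.mul_sum]
      _ ≤ (1 / ρ) * (δ * totalZ μ f true) := by
          apply mul_le_mul_of_nonneg_left h2; positivity
      _ = (δ / ρ) * totalZ μ f true := by ring
  have hmain : (1 - ε) * totalZ μ f false ≤ ∑ R : Finset X × Finset Y, w R * rMassZ μ f false R :=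
    key0 ▸ hcov
  linarith [hsplit ▸ hmain]
end

section
/- For every function f : X × Y → Z on finite sets X, Y, Z, every z ∈ Z, and every ε ∈ (0,1): srec^z_{ε,ε}(f) ≤ prt_ε(f); in particular srec_{ε,ε}(f) ≤ prt_ε(f). -/
open scoped BigOperators
open scoped Classical

lemma rcov_nonneg' {X Y : Type} [Fintype X] [Fintype Y]
    (w : Finset X × Finset Y → ℝ) (hw : ∀ R, 0 ≤ w R) (x : X) (y : Y) :
    0 ≤ rcov w x y := by
  apply Finset.sum_nonneg
  intro R _
  split
  · exact hw R
  · exact le_refl 0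

lemma rcov_single {X Y Z : Type} [Fintype X] [Fintype Y] (f : X → Y → Z) (z : Z) (x : X) (y : Y) :
    rcov (fun R : Finset X × Finset Y =>
        if ∃ p : X × Y, f p.1 p.2 = z ∧ R = ({p.1}, {p.2}) then (1:ℝ) else 0) x y
      = if f x y = z then 1 else 0 := by
  classical
  unfold rcov
  rw [Finset.sum_eq_single (({x}, {y}) : Finset X × Finset Y)]
  · have hmem : x ∈ (({x}, {y}) : Finset X × Finset Y).1 ∧ y ∈ (({x}, {y}) : Finset X × Finset Y).2 := by
      simp
    rw [if_pos hmem]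
    beta_reduce
    by_cases h : f x y = z
    · rw [if_pos (⟨(x, y), h, rfl⟩ : ∃ p : X × Y,
        f p.1 p.2 = z ∧ (({x}, {y}) : Finset X × Finset Y) = ({p.1}, {p.2})), if_pos h]
    · rw [if_neg, if_neg h]
      rintro ⟨⟨a, b⟩, hp, heq⟩
      simp only [Prod.ext_iff, Finset.singleton_inj] at heq
      obtain ⟨rfl, rfl⟩ := heq
      exact h hp
  · intro R _ hR
    by_cases hmem : x ∈ R.1 ∧ y ∈ R.2
    · rw [if_pos hmem]
      beta_reduce
      rw [if_neg]
      rintro ⟨⟨a, b⟩, hp, rfl⟩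
      simp only [Finset.mem_singleton] at hmem
      exact hR (by simp [Prod.ext_iff, hmem.1, hmem.2])
    · rw [if_neg hmem]
  · intro h
    exact absurd (Finset.mem_univ _) h

/-- **`srec ≤ prt` (the smooth rectangle bound relaxes the partition bound).** For every
`f : X × Y → Z` and `ε ∈ (0,1)`: `srec^z_{ε,ε}(f) ≤ prt_ε(f)` for every `z ∈ Z`, and in
particular `srec_{ε,ε}(f) ≤ prt_ε(f)`. -/
theorem srec_le_prt {X Y Z : Type} [Fintype X] [Fintype Y] [Fintype Z] [Nonempty Z]
    (f : X → Y → Z) (ε : ℝ) (hε : ε ∈ Set.Ioo (0 : ℝ) 1) :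
    (∀ z : Z, srecZgen f z ε ε ≤ prtGen f ε) ∧ srecGen f ε ε ≤ prtGen f ε := by
  classical
  obtain ⟨hε0, hε1⟩ := hε
  set P : Set ℝ := { v : ℝ | ∃ w : Z → Finset X × Finset Y → ℝ,
    (∀ z R, 0 ≤ w z R) ∧
    (∀ x y, 1 - ε ≤ rcov (w (f x y)) x y) ∧
    (∀ x y, (∑ z : Z, rcov (w z) x y) = 1) ∧
    v = ∑ z : Z, ∑ R : Finset X × Finset Y, w z R } with hP
  have hPne : P.Nonempty := by
    set w0 : Z → Finset X × Finset Y → ℝ := fun z R =>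
      if ∃ p : X × Y, f p.1 p.2 = z ∧ R = ({p.1}, {p.2}) then (1:ℝ) else 0 with hw0
    refine ⟨∑ z : Z, ∑ R : Finset X × Finset Y, w0 z R, w0, ?_, ?_, ?_, rfl⟩
    · intro z R
      simp only [hw0]
      split <;> norm_num
    · intro x y
      rw [hw0, rcov_single f (f x y) x y, if_pos rfl]
      linarith
    · intro x y
      have : ∀ z : Z, rcov (w0 z) x y = if f x y = z then 1 else 0 := fun z =>
        rcov_single f z x y
      simp only [this]
      rw [Finset.sum_ite_eq Finset.univ (f x y) (fun _ => (1:ℝ))]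
      simp
  have key : ∀ z : Z, srecZgen f z ε ε ≤ prtGen f ε := by
    intro z
    unfold srecZgen prtGen
    apply le_csInf hPne
    rintro v ⟨w, hw0, h1, h2, rfl⟩
    have hfeas : (∑ R : Finset X × Finset Y, w z R) ∈
        { v : ℝ | ∃ w' : Finset X × Finset Y → ℝ,
          (∀ R, 0 ≤ w' R) ∧
          (∀ x y, f x y = z → 1 - ε ≤ rcov w' x y) ∧
          (∀ x y, f x y ≠ z → rcov w' x y ≤ ε) ∧
          (∀ x y, rcov w' x y ≤ 1) ∧
          v = ∑ R : Finset X × Finset Y, w' R } := by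
      refine ⟨w z, hw0 z, ?_, ?_, ?_, rfl⟩
      · intro x y hxy
        have := h1 x y
        rwa [hxy] at this
      · intro x y hxy
        have hsum := h2 x y
        have hlow := h1 x y
        have hp : ∑ z' ∈ ({z, f x y} : Finset Z), rcov (w z') x y
            = rcov (w z) x y + rcov (w (f x y)) x y :=
          Finset.sum_pair (Ne.symm hxy)
        have hle := Finset.sum_le_sum_of_subset_of_nonneg
          (Finset.subset_univ ({z, f x y} : Finset Z))
          (fun z' _ _ => rcov_nonneg' (w z') (hw0 z') x y)
        rw [hp] at hle
        linarith
      · intro x y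
        have hsum := h2 x y
        have := Finset.single_le_sum
          (f := fun z' => rcov (w z') x y)
          (fun z' _ => rcov_nonneg' (w z') (hw0 z') x y) (Finset.mem_univ z)
        linarith
    refine le_trans (csInf_le ?_ hfeas) ?_
    · refine ⟨0, ?_⟩
      rintro v' ⟨w', hw', -, -, -, rfl⟩
      exact Finset.sum_nonneg fun R _ => hw' R
    · exact Finset.single_le_sum
        (f := fun z' => ∑ R : Finset X × Finset Y, w z' R)
        (fun z' _ => Finset.sum_nonneg fun R _ => hw0 z' R) (Finset.mem_univ z)
  refine ⟨key, ?_⟩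
  apply csSup_le (Set.range_nonempty _)
  rintro v ⟨z, rfl⟩
  exact key z
end
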